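/- With F, φ, γ as above, for each generator x_i (0 ≤ i < q) one has φ(θ(x_i)) = ((j ↦ γ^j(x_i)), 1). Explicitly, φ(x_i x_{i+1} ⋯ x_{i-1}) is the element of the wreath product with trivial permutation and coordinates (x_i, x_{i+1}, …, x_{i-1}) (indices mod q). -/

import Mathlib

/-!
Write `ι = (j ↦ x_j)` and `σ = (j ↦ j + 1)`, so that `φ(x_k) = ⟨δ_{k,0} ι, σ⟩`. A product of
elements `⟨a_m, σ⟩` of a semidirect product has permutation part `σ^n` and coordinate part the
ordered product of the translates `σ^m · a_m`. In `φ(x_i x_{i+1} ⋯ x_{i-1})` there are `q`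
factors, so the permutation is `σ^q = 1`, and only the factor with `i + m = 0` has a nontrivial
coordinate part, namely `ι` translated by `σ^{-i}`, which is `(j ↦ x_{i+j})`.
-/

/-- The permutation action of `Equiv.Perm (Fin q)` on `Fin q → G` by permuting
coordinates, as a homomorphism to `MulAut`. -/
def permAut (q : ℕ) (G : Type*) [Group G] :
    Equiv.Perm (Fin q) →* MulAut (Fin q → G) where
  toFun σ :=
    { toFun := fun f => f ∘ σ.symm
      invFun := fun f => f ∘ σ
      left_inv := fun f => by ext j; simp
      right_inv := fun f => by ext j; simp
      map_mul' := fun f g => rfl }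
  map_one' := by ext f j; rfl
  map_mul' := fun σ τ => by ext f j; rfl

/-- The permutational wreath product `G ≀ Sym(Fin q)`. -/
abbrev Wreath (q : ℕ) (G : Type*) [Group G] :=
  (Fin q → G) ⋊[permAut q G] Equiv.Perm (Fin q)

/-- The Thue–Morse self-similarity decomposition
`φ : F → F ≀ Sym(Fin q)`, with `φ(x_0) = ⟨x_0,…,x_{q-1}⟩σ` and
`φ(x_i) = ⟨1,…,1⟩σ` for `i ≥ 1`, where `σ : j ↦ j + 1 (mod q)`. -/
noncomputable def phiW (q : ℕ) [NeZero q] :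
    FreeGroup (Fin q) →* Wreath q (FreeGroup (Fin q)) :=
  FreeGroup.lift fun i : Fin q =>
    ⟨if i = 0 then (fun j => FreeGroup.of j) else 1, Equiv.addRight (1 : Fin q)⟩

/-- The Thue–Morse substitution `θ` extended to the free group:
`θ(x_i) = x_i x_{i+1} ⋯ x_{i-1}`. -/
noncomputable def tmF (q : ℕ) [NeZero q] : FreeGroup (Fin q) →* FreeGroup (Fin q) :=
  FreeGroup.lift fun i : Fin q => (List.ofFn fun j : Fin q => FreeGroup.of (i + j)).prod

/-- The automorphism `γ` of the free group permuting the generators cyclically,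
`x_i ↦ x_{i+1 mod q}`. -/
noncomputable def cycF (q : ℕ) [NeZero q] : FreeGroup (Fin q) →* FreeGroup (Fin q) :=
  FreeGroup.lift fun i : Fin q => FreeGroup.of (i + 1)

open Fin.NatCast

theorem List.prod_ofFn_eq_single {M : Type*} [Monoid M] {n : ℕ} (f : Fin n → M) (k : Fin n)
    (h : ∀ m ≠ k, f m = 1) : (List.ofFn f).prod = f k := by
  induction n with
  | zero => exact k.elim0
  | succ n ih =>
    rw [List.ofFn_succ, List.prod_cons]
    cases k using Fin.cases with
    | zero =>
      rw [List.prod_eq_one, mul_one]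
      simp only [List.mem_ofFn, forall_exists_index, forall_apply_eq_imp_iff]
      exact fun m => h _ (Fin.succ_ne_zero m)
    | succ k =>
      rw [h 0 (Fin.succ_ne_zero k).symm, one_mul]
      exact ih _ k fun m hm => h _ (Fin.succ_injective _ |>.ne hm)

theorem SemidirectProduct.list_prod_ofFn_mk {N G : Type*} [Group N] [Group G]
    {φ : G →* MulAut N} {n : ℕ} (a : Fin n → N) (g : G) :
    (List.ofFn fun m => (⟨a m, g⟩ : N ⋊[φ] G)).prod =
      ⟨(List.ofFn fun m => φ (g ^ (m : ℕ)) (a m)).prod, g ^ n⟩ := by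
  induction n with
  | zero => rw [List.ofFn_zero, List.ofFn_zero, pow_zero]; rfl
  | succ n ih =>
    rw [List.ofFn_succ, List.prod_cons, ih, List.ofFn_succ, List.prod_cons, mul_def]
    simp only [Fin.val_zero, pow_zero, map_one, MulAut.one_apply, Fin.val_succ, pow_succ',
      map_list_prod, List.map_ofFn, Function.comp_def, map_mul, MulAut.mul_apply]

theorem permAut_apply (q : ℕ) {G : Type*} [Group G] (σ : Equiv.Perm (Fin q)) (f : Fin q → G) :
    permAut q G σ f = f ∘ σ.symm :=
  rfl

theorem iterate_cycF_of (q : ℕ) [NeZero q] (n : ℕ) (i : Fin q) :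
    (⇑(cycF q))^[n] (FreeGroup.of i) = FreeGroup.of (i + n) := by
  induction n with
  | zero => simp
  | succ n ih =>
    rw [Function.iterate_succ_apply', ih, cycF, FreeGroup.lift_apply_of, Nat.cast_succ, add_assoc]

theorem phiW_prod_ofFn_of_add (q : ℕ) [NeZero q] (i : Fin q) :
    phiW q ((List.ofFn fun j : Fin q => FreeGroup.of (i + j)).prod) =
      ⟨fun j : Fin q => FreeGroup.of (i + j), 1⟩ := by
  simp only [map_list_prod, List.map_ofFn, Function.comp_def, phiW, FreeGroup.lift_apply_of]
  rw [SemidirectProduct.list_prod_ofFn_mk]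
  congr 1
  · rw [List.prod_ofFn_eq_single _ (-i), add_neg_cancel, if_pos rfl, Equiv.nsmul_addRight,
      nsmul_one, Fin.cast_val_eq_self]
    · ext j
      simp [permAut_apply, add_comm]
    · intro m hm
      rw [if_neg (by contrapose! hm; exact eq_neg_of_add_eq_zero_right hm), map_one]
  · rw [Equiv.nsmul_addRight, nsmul_one, Fin.natCast_self, Equiv.addRight_zero]

theorem stmt_5_general (q : ℕ) [NeZero q] (i : Fin q) :
    phiW q (tmF q (FreeGroup.of i)) =
      ⟨fun j : Fin q => (⇑(cycF q))^[(j : ℕ)] (FreeGroup.of i), 1⟩ ∧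
    phiW q ((List.ofFn fun j : Fin q => FreeGroup.of (i + j)).prod) =
      ⟨fun j : Fin q => FreeGroup.of (i + j), 1⟩ := by
  simp only [iterate_cycF_of, Fin.cast_val_eq_self, tmF, FreeGroup.lift_apply_of]
  exact ⟨phiW_prod_ofFn_of_add q i, phiW_prod_ofFn_of_add q i⟩

theorem stmt_5 (q : ℕ) [NeZero q] (hq : 2 ≤ q) (i : Fin q) :
    phiW q (tmF q (FreeGroup.of i)) =
      ⟨fun j : Fin q => (⇑(cycF q))^[(j : ℕ)] (FreeGroup.of i), 1⟩ ∧
    phiW q ((List.ofFn fun j : Fin q => FreeGroup.of (i + j)).prod) =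
      ⟨fun j : Fin q => FreeGroup.of (i + j), 1⟩ :=
  stmt_5_general q i
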